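/- In the labeling of mL_n given by λ(u_i^j) = j + m(i−1) and λ(v_i^j) = 2mn − m(i−1) − j + 1 (for 1 ≤ i ≤ n, 1 ≤ j ≤ m), the sum of the four vertex labels of every 4-cycle {u_i^j, u_{i+1}^j, v_{i+1}^j, v_i^j} equals 2(2mn) + 2 = 4mn + 2, independently of i and j; moreover these vertex labels form a bijection onto {1, ..., 2mn}. -/

import Mathlib

/-!
Both labels of a rung `uᵢʲ vᵢʲ` add up to `2mn + 1`, and every 4-cycle consists of two rungs, so
its label sum is `2(2mn + 1)`. The labeling is the numbering of the vertices that lists the `uᵢʲ`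
row by row from `0` to `mn - 1` and then the `vᵢʲ` in the reverse order up to `2mn - 1`, shifted
by one; this numbering is an equivalence onto `Fin (2mn)`.
-/

/-- The vertex labeling of `mLₙ` given by `λ(uᵢʲ) = j + m(i-1)` and
`λ(vᵢʲ) = 2mn - m(i-1) - j + 1` (here with 0-based indices: `u`-vertices
`Sum.inl (j, i)`, `v`-vertices `Sum.inr (j, i)`). -/
def ladderVertexLabel (m n : ℕ) : (Fin m × Fin n) ⊕ (Fin m × Fin n) → ℕ :=
  Sum.elim (fun p => (p.1.val + 1) + m * p.2.val)
    (fun p => 2 * m * n - m * p.2.val - (p.1.val + 1) + 1)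

open Function Set

theorem Fin.range_val_add_one (N : ℕ) : range (fun k : Fin N => (k : ℕ) + 1) = Icc 1 N := by
  ext k
  simp only [mem_range, mem_Icc, Fin.exists_iff]
  constructor
  · rintro ⟨k, hk, rfl⟩
    omega
  · rintro ⟨h1, h2⟩
    exact ⟨k - 1, by omega, by omega⟩

section LadderVertexEquiv

variable {m n : ℕ}

theorem Fin.val_add_mul_val_lt (j : Fin m) (i : Fin n) : (j : ℕ) + m * i < n * m :=
  (finProdFinEquiv (i, j)).isLt

variable (m n) in
def ladderVertexEquiv : (Fin m × Fin n) ⊕ (Fin m × Fin n) ≃ Fin (n * m + n * m) :=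
  let e := (Equiv.prodComm (Fin m) (Fin n)).trans finProdFinEquiv
  (Equiv.sumCongr e (e.trans Fin.revPerm)).trans finSumFinEquiv

theorem ladderVertexEquiv_inl_val (j : Fin m) (i : Fin n) :
    (ladderVertexEquiv m n (.inl (j, i)) : ℕ) = j + m * i :=
  rfl

theorem ladderVertexEquiv_inr_val (j : Fin m) (i : Fin n) :
    (ladderVertexEquiv m n (.inr (j, i)) : ℕ) = n * m - (j + m * i + 1) + n * m := by
  simp [ladderVertexEquiv, finProdFinEquiv]

end LadderVertexEquiv

theorem ladderVertexLabel_eq_comp_ladderVertexEquiv (m n : ℕ) :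
    ladderVertexLabel m n = (fun k : Fin _ => (k : ℕ) + 1) ∘ ladderVertexEquiv m n := by
  funext x
  rcases x with ⟨j, i⟩ | ⟨j, i⟩
  · rw [comp_apply, ladderVertexEquiv_inl_val]
    simp only [ladderVertexLabel, Sum.elim_inl]
    omega
  · have := Fin.val_add_mul_val_lt j i
    rw [comp_apply, ladderVertexEquiv_inr_val]
    simp only [ladderVertexLabel, Sum.elim_inr]
    rw [show 2 * m * n = n * m + n * m by ring]
    omega

theorem ladderVertexLabel_inl_add_inr (m n : ℕ) (p : Fin m × Fin n) :
    ladderVertexLabel m n (.inl p) + ladderVertexLabel m n (.inr p) = 2 * m * n + 1 := by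
  have := Fin.val_add_mul_val_lt p.1 p.2
  simp only [ladderVertexLabel, Sum.elim_inl, Sum.elim_inr]
  rw [show 2 * m * n = n * m + n * m by ring]
  omega

/-- For this labeling of `mLₙ`, the sum of the four vertex labels of every
4-cycle `{uᵢʲ, uᵢ₊₁ʲ, vᵢ₊₁ʲ, vᵢʲ}` equals `2(2mn) + 2 = 4mn + 2`, independently
of `i` and `j`; moreover the vertex labels form a bijection onto `{1,…,2mn}`. -/
theorem mLadder_vertex_labeling (m n : ℕ) :
    (∀ (j : Fin m) (i : Fin (n - 1)),
      ladderVertexLabel m n (Sum.inl (j, ⟨i.val, by have := i.isLt; omega⟩))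
        + ladderVertexLabel m n (Sum.inl (j, ⟨i.val + 1, by have := i.isLt; omega⟩))
        + ladderVertexLabel m n (Sum.inr (j, ⟨i.val + 1, by have := i.isLt; omega⟩))
        + ladderVertexLabel m n (Sum.inr (j, ⟨i.val, by have := i.isLt; omega⟩))
      = 2 * (2 * m * n) + 2) ∧
    Function.Injective (ladderVertexLabel m n) ∧
    Set.range (ladderVertexLabel m n) = Set.Icc 1 (2 * m * n) := by
  refine ⟨fun j i => ?_, ?_, ?_⟩
  · have rung := ladderVertexLabel_inl_add_inr m n (j, ⟨i.val, by omega⟩)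
    have rung_succ := ladderVertexLabel_inl_add_inr m n (j, ⟨i.val + 1, by omega⟩)
    omega
  · rw [ladderVertexLabel_eq_comp_ladderVertexEquiv]
    exact ((add_left_injective 1).comp Fin.val_injective).comp (ladderVertexEquiv m n).injective
  · rw [ladderVertexLabel_eq_comp_ladderVertexEquiv, (ladderVertexEquiv m n).surjective.range_comp,
      Fin.range_val_add_one]
    congr 1
    ring
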